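/- arXiv:2402.10443 — 2 statements merged into one kernel-verified Lean document; each statement's English description precedes it below -/
import Mathlib

section
/- Let X ⊆ ℕ² be standardization-invariant, i.e. for every finite set S ⊆ ℕ and every I, the number d_X(I;S) depends only on |S| (so d_X(I;S) = d_X(I;|S|)). Then for every n, every nonempty I ⊆ [n-1] with m = max(I) and I⁻ = I \ {m}, one has d_X(I;n) = C(n,m) · d_X(I⁻;m) · d_X(∅;n−m) − d_X(I⁻;n). -/
open Classical in
/-- The `X`-descent set of a word `w = w₁⋯w_n` (stored 0-indexed as a list), as a subset of
`[n-1] = {1, …, n-1}`: position `i` is an `X`-descent iff `(w_i, w_{i+1}) ∈ X`. -/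
noncomputable def XDes (X : Set (ℕ × ℕ)) (w : List ℕ) : Finset ℕ :=
  (Finset.Icc 1 (w.length - 1)).filter (fun i => (w.getD (i - 1) 0, w.getD i 0) ∈ X)

/-- `dX X I S` is the number of permutations of the finite label set `S ⊆ ℕ` (written in
one-line notation as duplicate-free lists using exactly the labels of `S`) whose
`X`-descent set is exactly `I`. -/
noncomputable def dX (X : Set (ℕ × ℕ)) (I : Finset ℕ) (S : Finset ℕ) : ℕ :=
  Nat.card {w : List ℕ // w.Nodup ∧ w.toFinset = S ∧ XDes X w = I}

/-- `dXn X I n = dX X I [n]` where `[n] = {1, …, n}`. -/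
noncomputable def dXn (X : Set (ℕ × ℕ)) (I : Finset ℕ) (n : ℕ) : ℕ :=
  dX X I (Finset.Icc 1 n)

open Finset

/-! A word on `[n]` has `X`-descent set `I` or `I⁻` exactly when its prefix of length `m` has
`X`-descent set `I⁻` and the remaining suffix has none: position `m` itself is unconstrained.
Such a word is a choice of the `m` letters of the prefix together with a word on them and one on
the complement, so by standardization-invariance there are `C(n,m) · d_X(I⁻;m) · d_X(∅;n−m)` of
them. -/

theorem mem_XDes {X : Set (ℕ × ℕ)} {w : List ℕ} {i : ℕ} :
    i ∈ XDes X w ↔ (1 ≤ i ∧ i < w.length) ∧ (w.getD (i - 1) 0, w.getD i 0) ∈ X := by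
  simp only [XDes, mem_filter, mem_Icc]
  constructor <;> rintro ⟨hi, hX⟩ <;> exact ⟨by omega, hX⟩

theorem XDes_append_erase_length (X : Set (ℕ × ℕ)) (u v : List ℕ) :
    (XDes X (u ++ v)).erase u.length =
      XDes X u ∪ (XDes X v).map (addLeftEmbedding u.length) := by
  ext i
  simp only [mem_erase, mem_union, mem_map, addLeftEmbedding_apply, mem_XDes,
    List.length_append]
  rcases lt_trichotomy i u.length with h | rfl | h
  · rw [List.getD_append _ _ _ _ (by omega), List.getD_append _ _ _ _ h]
    constructor
    · rintro ⟨-, ⟨hi, -⟩, hX⟩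
      exact Or.inl ⟨⟨hi, h⟩, hX⟩
    · rintro (⟨hi, hX⟩ | ⟨j, ⟨hj, -⟩, rfl⟩)
      · exact ⟨by omega, ⟨hi.1, by omega⟩, hX⟩
      · omega
  · constructor
    · rintro ⟨h, -⟩
      exact absurd rfl h
    · rintro (⟨⟨-, h⟩, -⟩ | ⟨j, ⟨⟨hj, -⟩, -⟩, hju⟩) <;> omega
  · obtain ⟨j, rfl⟩ := Nat.exists_eq_add_of_lt h
    rw [List.getD_append_right _ _ _ _ (by omega), List.getD_append_right _ _ _ _ (by omega),
      show u.length + j + 1 - 1 - u.length = j by omega,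
      show u.length + j + 1 - u.length = j + 1 by omega]
    constructor
    · rintro ⟨-, ⟨-, hj⟩, hX⟩
      exact Or.inr ⟨j + 1, ⟨⟨by omega, by omega⟩, hX⟩, by omega⟩
    · rintro (⟨⟨-, hi⟩, -⟩ | ⟨k, ⟨hk, hX⟩, hk'⟩)
      · omega
      · obtain rfl : k = j + 1 := by omega
        exact ⟨by omega, ⟨by omega, by omega⟩, hX⟩

theorem Finset.erase_eq_erase_iff {α : Type*} [DecidableEq α] {s t : Finset α} {a : α}
    (ha : a ∈ t) : s.erase a = t.erase a ↔ s = t ∨ s = t.erase a := by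
  constructor
  · intro h
    by_cases has : a ∈ s
    · exact Or.inl (by rw [← insert_erase has, h, insert_erase ha])
    · exact Or.inr (by rw [← h, erase_eq_of_notMem has])
  · rintro (rfl | rfl)
    · rfl
    · exact erase_idem

theorem XDes_eq_or_eq_erase_iff (X : Set (ℕ × ℕ)) {I : Finset ℕ} {m : ℕ} (hm : m ∈ I)
    (hmax : ∀ j ∈ I, j ≤ m) {w : List ℕ} (hw : m ≤ w.length) :
    (XDes X w = I ∨ XDes X w = I.erase m) ↔
      XDes X (w.take m) = I.erase m ∧ XDes X (w.drop m) = ∅ := by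
  have hsplit := XDes_append_erase_length X (w.take m) (w.drop m)
  rw [List.take_append_drop, List.length_take_of_le hw] at hsplit
  rw [← Finset.erase_eq_erase_iff hm, hsplit]
  constructor
  · intro h
    have hdrop : XDes X (w.drop m) = ∅ := by
      refine eq_empty_of_forall_notMem fun j hj => ?_
      have hmj : m + j ∈ I.erase m := h ▸ mem_union_right _ (mem_map_of_mem _ hj)
      have := hmax _ (mem_of_mem_erase hmj)
      have := (mem_XDes.1 hj).1.1
      omega
    rw [hdrop, map_empty, union_empty] at h
    exact ⟨h, hdrop⟩
  · rintro ⟨htake, hdrop⟩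
    rw [htake, hdrop, map_empty, union_empty]

def words (S : Finset ℕ) : Finset (List ℕ) :=
  (S.sort (· ≤ ·)).permutations.toFinset

theorem mem_words {S : Finset ℕ} {w : List ℕ} : w ∈ words S ↔ w.Nodup ∧ w.toFinset = S := by
  rw [words, List.mem_toFinset, List.mem_permutations]
  constructor
  · intro h
    refine ⟨h.nodup_iff.2 (S.sort_nodup _), ?_⟩
    rw [← S.sort_toFinset (· ≤ ·)]
    exact List.toFinset_eq_of_perm _ _ h
  · rintro ⟨hw, rfl⟩
    exact List.perm_of_nodup_nodup_toFinset_eq hw (sort_nodup _ _) (by simp)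

theorem length_of_mem_words {S : Finset ℕ} {w : List ℕ} (hw : w ∈ words S) : w.length = #S := by
  obtain ⟨hnd, rfl⟩ := mem_words.1 hw
  exact (List.toFinset_card_of_nodup hnd).symm

theorem append_mem_words {S T : Finset ℕ} (hST : S ⊆ T) {u v : List ℕ} (hu : u ∈ words S)
    (hv : v ∈ words (T \ S)) : u ++ v ∈ words T := by
  obtain ⟨hun, rfl⟩ := mem_words.1 hu
  obtain ⟨hvn, hvT⟩ := mem_words.1 hv
  refine mem_words.2 ⟨List.nodup_append'.2 ⟨hun, hvn, ?_⟩, ?_⟩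
  · rw [← List.disjoint_toFinset_iff_disjoint, hvT]
    exact disjoint_sdiff
  · rw [List.toFinset_append, hvT, union_sdiff_of_subset hST]

theorem drop_mem_words {T : Finset ℕ} {w : List ℕ} (hw : w ∈ words T) (m : ℕ) :
    w.drop m ∈ words (T \ (w.take m).toFinset) := by
  obtain ⟨hwn, rfl⟩ := mem_words.1 hw
  rw [← List.take_append_drop m w, List.nodup_append'] at hwn
  refine mem_words.2 ⟨hwn.2.1, ?_⟩
  conv_rhs => arg 1; rw [← List.take_append_drop m w]
  rw [List.toFinset_append, union_sdiff_left,
    sdiff_eq_self_of_disjoint (List.disjoint_toFinset_iff_disjoint.2 hwn.2.2).symm]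

theorem dX_eq_card_filter_words (X : Set (ℕ × ℕ)) (I S : Finset ℕ) :
    dX X I S = #{w ∈ words S | XDes X w = I} := by
  rw [dX, ← Nat.card_eq_finsetCard]
  exact Nat.card_congr <| Equiv.subtypeEquivRight fun w => by
    rw [mem_filter, mem_words, and_assoc]

theorem card_filter_words_take_drop (T : Finset ℕ) {m : ℕ} (hm : m ≤ #T)
    (p q : List ℕ → Prop) [DecidablePred p] [DecidablePred q] :
    #{w ∈ words T | p (w.take m) ∧ q (w.drop m)} =
      ∑ S ∈ T.powersetCard m, #{u ∈ words S | p u} * #{v ∈ words (T \ S) | q v} := by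
  simp_rw [← card_product]
  rw [← card_sigma]
  refine card_nbij' (fun w => ⟨(w.take m).toFinset, w.take m, w.drop m⟩)
    (fun x => x.2.1 ++ x.2.2) ?_ ?_ (fun w _ => List.take_append_drop m w) ?_
  · intro w hw
    simp only [mem_coe, mem_filter, mem_sigma, mem_powersetCard, mem_product] at hw ⊢
    obtain ⟨hwT, hp, hq⟩ := hw
    obtain ⟨hwn, rfl⟩ := mem_words.1 hwT
    have htake : w.take m ∈ words (w.take m).toFinset :=
      mem_words.2 ⟨hwn.sublist (List.take_sublist m w), rfl⟩
    have hsub : (w.take m).toFinset ⊆ w.toFinset := fun x hx =>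
      List.mem_toFinset.2 (List.take_subset m w (List.mem_toFinset.1 hx))
    refine ⟨⟨hsub, ?_⟩, ⟨htake, hp⟩, ⟨drop_mem_words hwT m, hq⟩⟩
    rw [← length_of_mem_words htake, List.length_take_of_le (length_of_mem_words hwT ▸ hm)]
  · rintro ⟨S, u, v⟩ hx
    simp only [mem_coe, mem_filter, mem_sigma, mem_powersetCard, mem_product] at hx ⊢
    obtain ⟨⟨hST, hS⟩, ⟨hu, hp⟩, ⟨hv, hq⟩⟩ := hx
    have hlen : u.length = m := by rw [length_of_mem_words hu, hS]
    rw [List.take_left' hlen, List.drop_left' hlen]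
    exact ⟨append_mem_words hST hu hv, hp, hq⟩
  · rintro ⟨S, u, v⟩ hx
    simp only [mem_coe, mem_filter, mem_sigma, mem_powersetCard, mem_product] at hx
    obtain ⟨⟨-, hS⟩, ⟨hu, -⟩, -⟩ := hx
    have hlen : u.length = m := by rw [length_of_mem_words hu, hS]
    simp only [List.take_left' hlen, List.drop_left' hlen, (mem_words.1 hu).2]

/-- binomial recursion under standardization-invariance.
If `d_X(I;S)` depends only on `|S|` (i.e. `d_X(I;S) = d_X(I;|S|)` always), then for every `n`
and nonempty `I ⊆ [n-1]` with `m = max I`, `I⁻ = I \ {m}`: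
`d_X(I;n) = C(n,m)·d_X(I⁻;m)·d_X(∅;n−m) − d_X(I⁻;n)`. -/
theorem stmt1 (X : Set (ℕ × ℕ))
    (hstd : ∀ (S : Finset ℕ) (I : Finset ℕ), dX X I S = dXn X I S.card)
    (n : ℕ) (I : Finset ℕ) (hI : I ⊆ Finset.Icc 1 (n - 1)) (hne : I.Nonempty) :
    (dXn X I n : ℤ) =
      (n.choose (I.max' hne) : ℤ) * (dXn X (I.erase (I.max' hne)) (I.max' hne) : ℤ)
        * (dXn X ∅ (n - I.max' hne) : ℤ)
      - (dXn X (I.erase (I.max' hne)) n : ℤ) := by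
  set m := I.max' hne
  have hmI : m ∈ I := I.max'_mem hne
  have hcard : #(Icc 1 n) = n := by simp
  have hm : m ≤ #(Icc 1 n) := by have := mem_Icc.1 (hI hmI); omega
  have hsum : dXn X I n + dXn X (I.erase m) n =
      n.choose m * (dXn X (I.erase m) m * dXn X ∅ (n - m)) := calc
    _ = #{w ∈ words (Icc 1 n) | XDes X w = I ∨ XDes X w = I.erase m} := by
      rw [dXn, dXn, dX_eq_card_filter_words, dX_eq_card_filter_words, filter_or,
        card_union_of_disjoint (disjoint_filter.2 fun w _ h h' =>
          erase_eq_self.1 (h ▸ h').symm hmI)]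
    _ = #{w ∈ words (Icc 1 n) | XDes X (w.take m) = I.erase m ∧ XDes X (w.drop m) = ∅} := by
      refine congrArg card (filter_congr fun w hw =>
        XDes_eq_or_eq_erase_iff X hmI (fun j hj => I.le_max' j hj) ?_)
      exact (length_of_mem_words hw).symm ▸ hm
    _ = ∑ S ∈ (Icc 1 n).powersetCard m, dX X (I.erase m) S * dX X ∅ (Icc 1 n \ S) := by
      simp only [dX_eq_card_filter_words]
      exact card_filter_words_take_drop _ hm (XDes X · = I.erase m) (XDes X · = ∅)
    _ = _ := by
      rw [sum_const_nat fun S hS => ?_, card_powersetCard, hcard]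
      obtain ⟨hS, hSm⟩ := mem_powersetCard.1 hS
      rw [hstd, hstd, hSm, card_sdiff_of_subset hS, hcard, hSm]
  rw [eq_sub_iff_add_eq, mul_assoc]
  exact_mod_cast hsum
end

section
/- Let X = {(a,b) ∈ ℕ² : a even, b odd}. Then for every n ≥ 1, d_X(∅;n) = ⌊n/2⌋! · ⌈n/2⌉!. That is, the number of permutations π ∈ 𝔖_n in which no even entry is immediately followed by an odd entry equals ⌊n/2⌋!⌈n/2⌉!. -/
/-! No even entry is immediately followed by an odd one exactly when every odd entry precedes
every even one: the relation `Odd b → Odd a` is transitive, so forbidding it to fail between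
neighbours forbids it to fail between any two entries. Such a permutation is an arbitrary
arrangement of the `⌈n/2⌉` odd labels followed by an arbitrary arrangement of the `⌊n/2⌋`
even labels. -/

open Finset

lemma Finset.natCard_nodup_toFinset_eq {α : Type*} [DecidableEq α] (S : Finset α) :
    Nat.card {w : List α // w.Nodup ∧ w.toFinset = S} = (#S).factorial := by
  have hperm : ∀ w : List α,
      (w.Nodup ∧ w.toFinset = S) ↔ w ∈ S.toList.permutations.toFinset := by
    intro w
    rw [List.mem_toFinset, List.mem_permutations]
    refine ⟨fun ⟨hw, hS⟩ => List.perm_of_nodup_nodup_toFinset_eq hw S.nodup_toList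
      (hS.trans S.toList_toFinset.symm), fun h => ⟨h.nodup_iff.mpr S.nodup_toList, ?_⟩⟩
    rw [List.toFinset_eq_of_perm _ _ h, S.toList_toFinset]
  rw [Nat.card_congr (Equiv.subtypeEquivRight hperm), Nat.card_eq_finsetCard,
    List.toFinset_card_of_nodup (List.nodup_permutations _ S.nodup_toList),
    List.length_permutations, S.length_toList]

lemma XDes_eq_empty_iff (X : Set (ℕ × ℕ)) (w : List ℕ) :
    XDes X w = ∅ ↔ w.IsChain (fun a b => (a, b) ∉ X) := by
  classical
  rw [XDes, filter_eq_empty_iff, List.isChain_iff_getElem]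
  constructor
  · intro h i hi
    have hmem : i + 1 ∈ Icc 1 (w.length - 1) := mem_Icc.mpr ⟨i.succ_pos, by omega⟩
    simpa [List.getD_eq_getElem, hi, Nat.lt_of_succ_lt hi] using h hmem
  · intro h i hi
    obtain ⟨i, rfl⟩ : ∃ j, i = j + 1 := ⟨i - 1, by rw [mem_Icc] at hi; omega⟩
    have hi' : i + 1 < w.length := by rw [mem_Icc] at hi; omega
    simpa [List.getD_eq_getElem, hi', Nat.lt_of_succ_lt hi'] using h i hi'

section PartitionedWords

variable {α : Type*} (p : α → Prop)

lemma List.pairwise_append_of_forall {u v : List α} (hu : ∀ x ∈ u, p x)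
    (hv : ∀ x ∈ v, ¬p x) :
    (u ++ v).Pairwise (fun a b => p b → p a) :=
  List.pairwise_append.mpr ⟨List.pairwise_of_forall_mem_list fun a ha _ _ _ => hu a ha,
    List.pairwise_of_forall_mem_list fun _ _ b hb hpb => absurd hpb (hv b hb),
    fun a ha _ _ _ => hu a ha⟩

lemma List.isChain_imp_iff_pairwise {w : List α} :
    w.IsChain (fun a b => p b → p a) ↔ w.Pairwise (fun a b => p b → p a) :=
  @List.isChain_iff_pairwise _ _ _ ⟨fun hab hbc hc => hab (hbc hc)⟩

variable [DecidablePred p]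

lemma List.filter_append_filter_not_of_pairwise {w : List α}
    (hw : w.Pairwise (fun a b => p b → p a)) :
    w.filter (p ·) ++ w.filter (¬p ·) = w := by
  induction w with
  | nil => rfl
  | cons a t ih =>
    rw [List.pairwise_cons] at hw
    by_cases ha : p a
    · simpa [ha] using ih hw.2
    · have hfalse : ∀ b ∈ t, ¬p b := fun b hb hpb => ha (hw.1 b hb hpb)
      have hp : t.filter (p ·) = [] := List.filter_eq_nil_iff.mpr (by simpa using hfalse)
      simpa [ha, hp] using hfalse

variable [DecidableEq α]

lemma List.forall_mem_of_toFinset_eq_filter {u : List α} {S : Finset α}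
    (h : u.toFinset = S.filter p) : ∀ x ∈ u, p x := fun _ hx =>
  (Finset.mem_filter.mp (h ▸ List.mem_toFinset.mpr hx)).2

def partitionedWordsEquiv (S : Finset α) :
    {w : List α // w.Nodup ∧ w.toFinset = S ∧ w.Pairwise (fun a b => p b → p a)} ≃
      {u : List α // u.Nodup ∧ u.toFinset = S.filter p} ×
        {v : List α // v.Nodup ∧ v.toFinset = S.filter (¬p ·)} where
  toFun w := (⟨w.1.filter (p ·), w.2.1.filter _, by rw [List.toFinset_filter, w.2.2.1]; simp⟩,
    ⟨w.1.filter (¬p ·), w.2.1.filter _, by rw [List.toFinset_filter, w.2.2.1]; simp⟩)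
  invFun := fun ⟨⟨u, hu, hSu⟩, ⟨v, hv, hSv⟩⟩ =>
    have hpu := List.forall_mem_of_toFinset_eq_filter p hSu
    have hpv := List.forall_mem_of_toFinset_eq_filter _ hSv
    ⟨u ++ v, List.nodup_append.mpr ⟨hu, hv, fun a ha b hb hab => hpv b hb (hab ▸ hpu a ha)⟩,
      by rw [List.toFinset_append, hSu, hSv, filter_union_filter_not_eq],
      List.pairwise_append_of_forall p hpu hpv⟩
  left_inv w := Subtype.ext (List.filter_append_filter_not_of_pairwise p w.2.2.2)
  right_inv := fun ⟨⟨u, hu, hSu⟩, ⟨v, hv, hSv⟩⟩ => by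
    have hpu := List.forall_mem_of_toFinset_eq_filter p hSu
    have hpv := List.forall_mem_of_toFinset_eq_filter _ hSv
    ext1 <;> ext1 <;> dsimp only
    · rw [List.filter_append, List.filter_eq_self.mpr (by simpa using hpu),
        List.filter_eq_nil_iff.mpr (by simpa using hpv), List.append_nil]
    · rw [List.filter_append, List.filter_eq_nil_iff.mpr (by simpa using hpu),
        List.filter_eq_self.mpr (by simpa using hpv), List.nil_append]

lemma natCard_nodup_pairwise_eq (S : Finset α) :
    Nat.card {w : List α // w.Nodup ∧ w.toFinset = S ∧ w.Pairwise (fun a b => p b → p a)} =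
      (#(S.filter p)).factorial * (#(S.filter (¬p ·))).factorial := by
  rw [Nat.card_congr (partitionedWordsEquiv p S), Nat.card_prod,
    Finset.natCard_nodup_toFinset_eq, Finset.natCard_nodup_toFinset_eq]

end PartitionedWords

lemma card_filter_odd_Icc_one (n : ℕ) : #((Icc 1 n).filter Odd) = (n + 1) / 2 := by
  induction n with
  | zero => rfl
  | succ n ih =>
    have hIcc : Icc 1 (n + 1) = insert (n + 1) (Icc 1 n) :=
      (insert_Icc_right_eq_Icc_succ (Nat.le_add_left 1 n)).symm
    rw [hIcc, filter_insert]
    split_ifs with h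
    · rw [card_insert_of_notMem (by simp), ih]
      obtain ⟨k, hk⟩ := h
      omega
    · rw [ih]
      obtain ⟨k, hk⟩ := Nat.not_odd_iff_even.mp h
      omega

lemma card_filter_not_odd_Icc_one (n : ℕ) : #((Icc 1 n).filter (¬Odd ·)) = n / 2 := by
  have := card_filter_add_card_filter_not (s := Icc 1 n) Odd
  rw [card_filter_odd_Icc_one, Nat.card_Icc] at this
  omega

theorem stmt14_general (n : ℕ) :
    dXn {q : ℕ × ℕ | Even q.1 ∧ Odd q.2} ∅ n =
      (n / 2).factorial * ((n + 1) / 2).factorial := by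
  have hX : (fun a b => (a, b) ∉ {q : ℕ × ℕ | Even q.1 ∧ Odd q.2}) =
      fun a b => Odd b → Odd a := by
    ext a b
    simp only [Set.mem_ofPred_eq, ← Nat.not_odd_iff_even]
    tauto
  have hwords : ∀ w : List ℕ, XDes {q : ℕ × ℕ | Even q.1 ∧ Odd q.2} w = ∅ ↔
      w.Pairwise (fun a b => Odd b → Odd a) := fun w => by
    rw [XDes_eq_empty_iff, hX, List.isChain_imp_iff_pairwise]
  simp_rw [dXn, dX, hwords]
  rw [natCard_nodup_pairwise_eq, card_filter_odd_Icc_one, card_filter_not_odd_Icc_one,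
    mul_comm]

/-- Let `X = {(a,b) : a even, b odd}`. Then for every `n ≥ 1`,
`d_X(∅;n) = ⌊n/2⌋! ⌈n/2⌉!`: the number of permutations of `[n]` in which no even entry is
immediately followed by an odd entry is `⌊n/2⌋!⌈n/2⌉!`. -/
theorem stmt14 (n : ℕ) (hn : 1 ≤ n) :
    dXn {q : ℕ × ℕ | Even q.1 ∧ Odd q.2} ∅ n =
      (n / 2).factorial * ((n + 1) / 2).factorial :=
  stmt14_general n
end
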